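/- arXiv:2511.08285 — 2 statements merged into one kernel-verified Lean document; each statement's English description precedes it below -/
import Mathlib

section
/- Let λ ∈ (1/2, 1) and suppose Λ is a non-entangling (NE) map with Λ(λ Φ1 + (1−λ)|01⟩⟨01|) = λ Φ1 + (1−λ) Φ2. Then necessarily tr(Φ1 Λ(Φ1)) = (3λ−1)/(2λ), tr(Φ2 Λ(Φ1)) = (1−λ)/(2λ), and tr(Φ1 Λ(|01⟩⟨01|)) = tr(Φ2 Λ(|01⟩⟨01|)) = 1/2. -/
open Matrix Kronecker Polynomial
open scoped ComplexOrder

noncomputable section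

/-- Index set for two qubits: ℂ²⊗ℂ² ≅ ℂ⁴ with basis |00⟩,|01⟩,|10⟩,|11⟩. -/
abbrev Q2 : Type := Fin 2 × Fin 2
abbrev Mat2 : Type := Matrix (Fin 2) (Fin 2) ℂ
abbrev Mat4 : Type := Matrix Q2 Q2 ℂ
abbrev Vec4 : Type := Q2 → ℂ

/-- Computational basis vector |ij⟩. -/
def ket (i j : Fin 2) : Vec4 := fun p => if p = (i, j) then 1 else 0

/-- The rank-one matrix |ψ⟩⟨φ|. -/
def ketBra (ψ φ : Vec4) : Mat4 := fun p q => ψ p * star (φ q)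

/-- The four Bell vectors |Φ1⟩,…,|Φ4⟩. -/
def bell : Fin 4 → Vec4 :=
  ![(Real.sqrt 2 : ℂ)⁻¹ • (ket 0 0 + ket 1 1),
    (Real.sqrt 2 : ℂ)⁻¹ • (ket 0 0 - ket 1 1),
    (Real.sqrt 2 : ℂ)⁻¹ • (ket 1 0 + ket 0 1),
    (Real.sqrt 2 : ℂ)⁻¹ • (ket 1 0 - ket 0 1)]

/-- Bell projectors Φ_i = |Φ_i⟩⟨Φ_i|. -/
def bellProj (i : Fin 4) : Mat4 := ketBra (bell i) (bell i)

/-- A two-qubit density matrix: Hermitian positive semidefinite with trace one. -/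
def IsDensity (ρ : Mat4) : Prop := ρ.PosSemidef ∧ ρ.trace = 1

/-- Unit vector in ℂ². -/
def IsUnitVec (u : Fin 2 → ℂ) : Prop := ∑ x, Complex.normSq (u x) = 1

/-- Separable two-qubit density matrix: convex mixture of products of pure states. -/
def SepState (ρ : Mat4) : Prop :=
  ∃ (n : ℕ) (p : Fin n → ℝ) (u v : Fin n → Fin 2 → ℂ),
    (∀ i, 0 ≤ p i) ∧ (∑ i, p i = 1) ∧
    (∀ i, IsUnitVec (u i)) ∧ (∀ i, IsUnitVec (v i)) ∧
    ρ = ∑ i, (p i : ℂ) • (vecMulVec (u i) (star (u i)) ⊗ₖ vecMulVec (v i) (star (v i)))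

/-- A SEP map: Kraus operators in product form, trace preserving. -/
def IsSEP (T : Mat4 → Mat4) : Prop :=
  ∃ (k : ℕ) (A B : Fin k → Mat2),
    (∑ i, (A i ⊗ₖ B i)ᴴ * (A i ⊗ₖ B i) = 1) ∧
    ∀ X, T X = ∑ i, (A i ⊗ₖ B i) * X * (A i ⊗ₖ B i)ᴴ

/-- CPTP map in Kraus form. -/
def IsCPTP (T : Mat4 → Mat4) : Prop :=
  ∃ (k : ℕ) (K : Fin k → Mat4),
    (∑ i, (K i)ᴴ * K i = 1) ∧ ∀ X, T X = ∑ i, K i * X * (K i)ᴴ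

/-- Non-entangling (NE) map: CPTP and maps separable states to separable states. -/
def IsNE (T : Mat4 → Mat4) : Prop :=
  IsCPTP T ∧ ∀ ρ, SepState ρ → SepState (T ρ)

/-- The MEMS state ρ_λ = λ1 Φ1 + λ2 |01⟩⟨01| + λ3 Φ2 + λ4 |10⟩⟨10|. -/
def mems (l1 l2 l3 l4 : ℝ) : Mat4 :=
  (l1 : ℂ) • bellProj 0 + (l2 : ℂ) • ketBra (ket 0 1) (ket 0 1) +
  (l3 : ℂ) • bellProj 1 + (l4 : ℂ) • ketBra (ket 1 0) (ket 1 0)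

/-- The Bell-diagonal state σ_λ = λ1 Φ1 + λ2 Φ2 + λ3 Φ3 + λ4 Φ4. -/
def bdiag (l1 l2 l3 l4 : ℝ) : Mat4 :=
  (l1 : ℂ) • bellProj 0 + (l2 : ℂ) • bellProj 1 + (l3 : ℂ) • bellProj 2 + (l4 : ℂ) • bellProj 3

/-- The normalized vector |Φ1(ε)⟩ = (|Φ1⟩ + ε|10⟩)/√(1+ε²). -/
def phi1eps (ε : ℝ) : Vec4 :=
  (Real.sqrt (1 + ε ^ 2) : ℂ)⁻¹ • (bell 0 + (ε : ℂ) • ket 1 0)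

-- basic lemmas
lemma trace_ketBra_mul (ψ : Vec4) (σ : Mat4) :
    (ketBra ψ ψ * σ).trace = star ψ ⬝ᵥ σ *ᵥ ψ := by
  simp only [Matrix.trace, Matrix.diag, Matrix.mul_apply, ketBra, dotProduct,
    Matrix.mulVec, Pi.star_apply, Finset.mul_sum]
  rw [Finset.sum_comm]
  exact Finset.sum_congr rfl fun q _ => Finset.sum_congr rfl fun p _ => by ring

lemma ketBra_mulVec (ψ φ x : Vec4) : ketBra ψ φ *ᵥ x = (star φ ⬝ᵥ x) • ψ := by
  ext p
  simp only [Matrix.mulVec, dotProduct, ketBra, Pi.smul_apply, Pi.star_apply, smul_eq_mul,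
    Finset.sum_mul]
  exact Finset.sum_congr rfl fun q _ => by ring

lemma inv_sqrt2_sq : ((Real.sqrt 2 : ℂ))⁻¹ * ((Real.sqrt 2 : ℂ))⁻¹ = 1/2 := by
  rw [← mul_inv]
  norm_cast
  rw [Real.mul_self_sqrt (by norm_num)]
  norm_num

lemma bell0_pair (x : Vec4) :
    star (bell 0) ⬝ᵥ x = (Real.sqrt 2 : ℂ)⁻¹ * (x (0,0) + x (1,1)) := by
  simp [bell, dotProduct, ket, Fintype.sum_prod_type, Fin.sum_univ_two, Prod.ext_iff,
    map_inv₀, Complex.conj_ofReal, mul_add]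

lemma bell1_pair (x : Vec4) :
    star (bell 1) ⬝ᵥ x = (Real.sqrt 2 : ℂ)⁻¹ * (x (0,0) - x (1,1)) := by
  simp [bell, dotProduct, ket, Fintype.sum_prod_type, Fin.sum_univ_two, Prod.ext_iff,
    map_inv₀, Complex.conj_ofReal, mul_sub]
  ring

lemma bell0_apply_00 : bell 0 (0,0) = (Real.sqrt 2 : ℂ)⁻¹ := by simp [bell, ket]
lemma bell0_apply_11 : bell 0 (1,1) = (Real.sqrt 2 : ℂ)⁻¹ := by simp [bell, ket]
lemma bell1_apply_00 : bell 1 (0,0) = (Real.sqrt 2 : ℂ)⁻¹ := by simp [bell, ket]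
lemma bell1_apply_11 : bell 1 (1,1) = -(Real.sqrt 2 : ℂ)⁻¹ := by simp [bell, ket]

lemma bell_inner_00 : star (bell 0) ⬝ᵥ bell 0 = 1 := by
  rw [bell0_pair, bell0_apply_00, bell0_apply_11]
  rw [mul_add, inv_sqrt2_sq]; norm_num

lemma bell_inner_11 : star (bell 1) ⬝ᵥ bell 1 = 1 := by
  rw [bell1_pair, bell1_apply_00, bell1_apply_11]
  rw [mul_sub]; rw [show (Real.sqrt 2 : ℂ)⁻¹ * -(Real.sqrt 2 : ℂ)⁻¹ = -((Real.sqrt 2 : ℂ)⁻¹ * (Real.sqrt 2 : ℂ)⁻¹) by ring, sub_neg_eq_add, inv_sqrt2_sq]; norm_num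

lemma bell_inner_01 : star (bell 0) ⬝ᵥ bell 1 = 0 := by
  rw [bell0_pair, bell1_apply_00, bell1_apply_11]; ring

lemma bell_inner_10 : star (bell 1) ⬝ᵥ bell 0 = 0 := by
  rw [bell1_pair, bell0_apply_00, bell0_apply_11]; ring

lemma trace_bellProj_mul_bellProj (i j : Fin 4) :
    (bellProj i * bellProj j).trace = (star (bell i) ⬝ᵥ bell j) * (star (bell j) ⬝ᵥ bell i) := by
  rw [bellProj, bellProj, trace_ketBra_mul, ketBra_mulVec, dotProduct_smul, smul_eq_mul, mul_comm]

lemma ketBra_posSemidef (ψ : Vec4) : (ketBra ψ ψ).PosSemidef := by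
  refine Matrix.PosSemidef.of_dotProduct_mulVec_nonneg ?_ ?_
  · ext p q
    simp [ketBra, Matrix.conjTranspose_apply, mul_comm]
  · intro x
    have : star x ⬝ᵥ (ketBra ψ ψ *ᵥ x) = (star x ⬝ᵥ ψ) * star (star x ⬝ᵥ ψ) := by
      rw [ketBra_mulVec, dotProduct_smul, smul_eq_mul, mul_comm]
      congr 1
      simp [dotProduct, star_sum, star_mul', mul_comm]
    rw [this]
    exact mul_star_self_nonneg _

lemma posSemidef_sum {k : ℕ} (f : Fin k → Mat4) (h : ∀ i, (f i).PosSemidef) :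
    (∑ i, f i).PosSemidef := by
  classical
  refine Finset.sum_induction f _ (fun a b ha hb => ha.add hb) Matrix.PosSemidef.zero
    (fun i _ => h i)

lemma diag_nonneg {σ : Mat4} (h : σ.PosSemidef) (p : Q2) : 0 ≤ σ p p := by
  have := h.dotProduct_mulVec_nonneg (Pi.single p 1)
  simpa [dotProduct, Matrix.mulVec, Pi.single_apply, Finset.sum_ite_eq, Finset.mul_sum] using this

lemma trace_bellProj0 : (bellProj 0).trace = 1 := by
  simp only [bellProj, ketBra, Matrix.trace, Matrix.diag, Fintype.sum_prod_type,
    Fin.sum_univ_two]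
  rw [bell0_apply_00, bell0_apply_11]
  simp [bell, ket, Prod.ext_iff, map_inv₀, Complex.conj_ofReal]
  rw [inv_sqrt2_sq]; norm_num

lemma trace_e01 : (ketBra (ket 0 1) (ket 0 1)).trace = 1 := by
  simp [ketBra, ket, Matrix.trace, Matrix.diag, Fintype.sum_prod_type, Fin.sum_univ_two,
    Prod.ext_iff]

lemma kraus_trace {k : ℕ} (K : Fin k → Mat4) (hsum : ∑ i, (K i)ᴴ * K i = 1) (X : Mat4) :
    (∑ i, K i * X * (K i)ᴴ).trace = X.trace := by
  rw [Matrix.trace_sum]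
  have h1 : ∀ i : Fin k, (K i * X * (K i)ᴴ).trace = ((K i)ᴴ * K i * X).trace := by
    intro i
    rw [Matrix.trace_mul_cycle, Matrix.mul_assoc]
  simp_rw [h1]
  rw [← Matrix.trace_sum, ← Finset.sum_mul, hsum, Matrix.one_mul]

lemma kraus_psd {k : ℕ} (K : Fin k → Mat4) (X : Mat4) (hX : X.PosSemidef) :
    (∑ i, K i * X * (K i)ᴴ).PosSemidef :=
  posSemidef_sum _ fun i => hX.mul_mul_conjTranspose_same (K i)

lemma lagrange (a b c d : ℂ) :
    Complex.normSq (a*c + b*d) + Complex.normSq (star a * d - star b * c)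
      = (Complex.normSq a + Complex.normSq b) * (Complex.normSq c + Complex.normSq d) := by
  simp only [Complex.normSq_apply, Complex.add_re, Complex.add_im, Complex.mul_re,
    Complex.mul_im, Complex.sub_re, Complex.sub_im, Complex.star_def, Complex.conj_re,
    Complex.conj_im]
  ring

lemma kron_eq_ketBra (u v : Fin 2 → ℂ) :
    vecMulVec u (star u) ⊗ₖ vecMulVec v (star v)
      = ketBra (fun p => u p.1 * v p.2) (fun p => u p.1 * v p.2) := by
  ext p q
  simp only [kroneckerMap_apply, vecMulVec_apply, ketBra, Pi.star_apply, star_mul']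
  ring

lemma trace_ketBra_mul_ketBra (ψ w : Vec4) :
    (ketBra ψ ψ * ketBra w w).trace = (star ψ ⬝ᵥ w) * (star w ⬝ᵥ ψ) := by
  rw [trace_ketBra_mul, ketBra_mulVec, dotProduct_smul, smul_eq_mul, mul_comm]

lemma star_dot (ψ w : Vec4) : star w ⬝ᵥ ψ = star (star ψ ⬝ᵥ w) := by
  simp [dotProduct, star_sum, star_mul', mul_comm]

lemma trace_ketBra_mul_ketBra' (ψ w : Vec4) :
    (ketBra ψ ψ * ketBra w w).trace = (Complex.normSq (star ψ ⬝ᵥ w) : ℝ) := by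
  rw [trace_ketBra_mul_ketBra, star_dot ψ w, Complex.star_def, Complex.mul_conj]

lemma normSq_inv_sqrt2 : Complex.normSq ((Real.sqrt 2 : ℂ)⁻¹) = 1/2 := by
  rw [map_inv₀, Complex.normSq_ofReal, Real.mul_self_sqrt (by norm_num)]
  norm_num

lemma trace_bell0_kron (u v : Fin 2 → ℂ) :
    (bellProj 0 * (vecMulVec u (star u) ⊗ₖ vecMulVec v (star v))).trace
      = ((1/2 * Complex.normSq (u 0 * v 0 + u 1 * v 1) : ℝ) : ℂ) := by
  rw [kron_eq_ketBra, bellProj, trace_ketBra_mul_ketBra', bell0_pair]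
  rw [Complex.normSq_mul, normSq_inv_sqrt2]

lemma trace_bell1_kron (u v : Fin 2 → ℂ) :
    (bellProj 1 * (vecMulVec u (star u) ⊗ₖ vecMulVec v (star v))).trace
      = ((1/2 * Complex.normSq (u 0 * v 0 - u 1 * v 1) : ℝ) : ℂ) := by
  rw [kron_eq_ketBra, bellProj, trace_ketBra_mul_ketBra', bell1_pair]
  rw [Complex.normSq_mul, normSq_inv_sqrt2]

lemma unit_bound_add (u v : Fin 2 → ℂ) (hu : IsUnitVec u) (hv : IsUnitVec v) :
    Complex.normSq (u 0 * v 0 + u 1 * v 1) ≤ 1 := by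
  have h := lagrange (u 0) (u 1) (v 0) (v 1)
  have h2 : 0 ≤ Complex.normSq (star (u 0) * v 1 - star (u 1) * v 0) := Complex.normSq_nonneg _
  have hu' : Complex.normSq (u 0) + Complex.normSq (u 1) = 1 := by
    simpa [IsUnitVec, Fin.sum_univ_two] using hu
  have hv' : Complex.normSq (v 0) + Complex.normSq (v 1) = 1 := by
    simpa [IsUnitVec, Fin.sum_univ_two] using hv
  nlinarith

lemma unit_bound_sub (u v : Fin 2 → ℂ) (hu : IsUnitVec u) (hv : IsUnitVec v) :
    Complex.normSq (u 0 * v 0 - u 1 * v 1) ≤ 1 := by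
  have h := lagrange (u 0) (u 1) (v 0) (-(v 1))
  have h2 : 0 ≤ Complex.normSq (star (u 0) * -(v 1) - star (u 1) * v 0) := Complex.normSq_nonneg _
  have hu' : Complex.normSq (u 0) + Complex.normSq (u 1) = 1 := by
    simpa [IsUnitVec, Fin.sum_univ_two] using hu
  have hv' : Complex.normSq (v 0) + Complex.normSq (v 1) = 1 := by
    simpa [IsUnitVec, Fin.sum_univ_two] using hv
  rw [show u 0 * v 0 - u 1 * v 1 = u 0 * v 0 + u 1 * -(v 1) by ring]
  rw [Complex.normSq_neg] at h
  nlinarith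

lemma nonneg_exists {z : ℂ} (h : 0 ≤ z) : ∃ r : ℝ, 0 ≤ r ∧ z = (r : ℂ) := by
  obtain ⟨h1, h2⟩ := Complex.nonneg_iff.mp h
  exact ⟨z.re, h1, by apply Complex.ext <;> simp [← h2]⟩

lemma sep_bound0 (ρ : Mat4) (h : SepState ρ) :
    ∃ r : ℝ, (bellProj 0 * ρ).trace = (r : ℂ) ∧ r ≤ 1/2 := by
  obtain ⟨n, p, u, v, hp, hpsum, hu, hv, hρ⟩ := h
  refine ⟨∑ i, p i * (1/2 * Complex.normSq (u i 0 * v i 0 + u i 1 * v i 1)), ?_, ?_⟩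
  · rw [hρ, Finset.mul_sum, Matrix.trace_sum]
    push_cast
    refine Finset.sum_congr rfl fun i _ => ?_
    rw [Matrix.mul_smul, Matrix.trace_smul, trace_bell0_kron, smul_eq_mul]
    push_cast; ring
  · have hle : ∀ i, p i * (1/2 * Complex.normSq (u i 0 * v i 0 + u i 1 * v i 1)) ≤ p i * (1/2) := by
      intro i
      have hb := unit_bound_add (u i) (v i) (hu i) (hv i)
      have := hp i
      nlinarith
    calc _ ≤ ∑ i, p i * (1/2) := Finset.sum_le_sum fun i _ => hle i
      _ = 1/2 := by rw [← Finset.sum_mul, hpsum]; ring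

lemma sep_bound1 (ρ : Mat4) (h : SepState ρ) :
    ∃ r : ℝ, (bellProj 1 * ρ).trace = (r : ℂ) ∧ r ≤ 1/2 := by
  obtain ⟨n, p, u, v, hp, hpsum, hu, hv, hρ⟩ := h
  refine ⟨∑ i, p i * (1/2 * Complex.normSq (u i 0 * v i 0 - u i 1 * v i 1)), ?_, ?_⟩
  · rw [hρ, Finset.mul_sum, Matrix.trace_sum]
    push_cast
    refine Finset.sum_congr rfl fun i _ => ?_
    rw [Matrix.mul_smul, Matrix.trace_smul, trace_bell1_kron, smul_eq_mul]
    push_cast; ring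
  · have hle : ∀ i, p i * (1/2 * Complex.normSq (u i 0 * v i 0 - u i 1 * v i 1)) ≤ p i * (1/2) := by
      intro i
      have hb := unit_bound_sub (u i) (v i) (hu i) (hv i)
      have := hp i
      nlinarith
    calc _ ≤ ∑ i, p i * (1/2) := Finset.sum_le_sum fun i _ => hle i
      _ = 1/2 := by rw [← Finset.sum_mul, hpsum]; ring

lemma sum_two_traces (σ : Mat4) :
    (bellProj 0 * σ).trace + (bellProj 1 * σ).trace = σ (0,0) (0,0) + σ (1,1) (1,1) := by
  rw [bellProj, bellProj, trace_ketBra_mul, trace_ketBra_mul, bell0_pair, bell1_pair]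
  have h00 : ∀ p : Q2, (σ *ᵥ bell 0) p = (Real.sqrt 2:ℂ)⁻¹ * (σ p (0,0) + σ p (1,1)) := by
    intro p
    simp [Matrix.mulVec, dotProduct, bell, ket, Fintype.sum_prod_type, Fin.sum_univ_two,
      Prod.ext_iff, mul_add, mul_comm]
    ring
  have h11 : ∀ p : Q2, (σ *ᵥ bell 1) p = (Real.sqrt 2:ℂ)⁻¹ * (σ p (0,0) - σ p (1,1)) := by
    intro p
    simp [Matrix.mulVec, dotProduct, bell, ket, Fintype.sum_prod_type, Fin.sum_univ_two,
      Prod.ext_iff, mul_sub, mul_comm]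
    ring
  rw [h00, h00, h11, h11]
  linear_combination (2*σ (0,0) (0,0) + 2*σ (1,1) (1,1)) * inv_sqrt2_sq

lemma e01_sep : SepState (ketBra (ket 0 1) (ket 0 1)) := by
  refine ⟨1, fun _ => 1, fun _ i => if i = 0 then 1 else 0, fun _ i => if i = 1 then 1 else 0,
    fun _ => zero_le_one, by simp, fun _ => by simp [IsUnitVec, Fin.sum_univ_two],
    fun _ => by simp [IsUnitVec, Fin.sum_univ_two], ?_⟩
  rw [Fin.sum_univ_one]
  ext ⟨p1, p2⟩ ⟨q1, q2⟩
  simp only [ketBra, ket, vecMulVec_apply, kroneckerMap_apply, Pi.star_apply, Prod.mk.injEq,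
    Complex.ofReal_one, one_smul, Matrix.smul_apply, Prod.ext_iff]
  fin_cases p1 <;> fin_cases p2 <;> fin_cases q1 <;> fin_cases q2 <;>
    simp

lemma trace_phi00 : (bellProj 0 * bellProj 0).trace = 1 := by
  rw [trace_bellProj_mul_bellProj, bell_inner_00]; ring
lemma trace_phi01 : (bellProj 0 * bellProj 1).trace = 0 := by
  rw [trace_bellProj_mul_bellProj, bell_inner_01]; ring
lemma trace_phi10 : (bellProj 1 * bellProj 0).trace = 0 := by
  rw [trace_bellProj_mul_bellProj, bell_inner_10]; ring
lemma trace_phi11 : (bellProj 1 * bellProj 1).trace = 1 := by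
  rw [trace_bellProj_mul_bellProj, bell_inner_11]; ring

lemma kraus_lin {k : ℕ} (K : Fin k → Mat4) (a b : ℂ) (X Y : Mat4) :
    ∑ i, K i * (a • X + b • Y) * (K i)ᴴ
      = a • (∑ i, K i * X * (K i)ᴴ) + b • (∑ i, K i * Y * (K i)ᴴ) := by
  rw [Finset.smul_sum, Finset.smul_sum, ← Finset.sum_add_distrib]
  refine Finset.sum_congr rfl fun i _ => ?_
  simp [Matrix.mul_add, Matrix.add_mul, Matrix.mul_smul, Matrix.smul_mul]

theorem NE_rank2_forced_values (lam : ℝ) (h1 : 1 / 2 < lam) (h2 : lam < 1)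
    (T : Mat4 → Mat4) (hT : IsNE T)
    (hmap : T ((lam : ℂ) • bellProj 0 + ((1 - lam : ℝ) : ℂ) • ketBra (ket 0 1) (ket 0 1)) =
      (lam : ℂ) • bellProj 0 + ((1 - lam : ℝ) : ℂ) • bellProj 1) :
    (bellProj 0 * T (bellProj 0)).trace = (((3 * lam - 1) / (2 * lam) : ℝ) : ℂ) ∧
    (bellProj 1 * T (bellProj 0)).trace = (((1 - lam) / (2 * lam) : ℝ) : ℂ) ∧
    (bellProj 0 * T (ketBra (ket 0 1) (ket 0 1))).trace = 1 / 2 ∧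
    (bellProj 1 * T (ketBra (ket 0 1) (ket 0 1))).trace = 1 / 2 := by
  obtain ⟨⟨k, K, hsum, hform⟩, hNE⟩ := hT
  set e01 : Mat4 := ketBra (ket 0 1) (ket 0 1) with he01
  have hlin : T ((lam:ℂ) • bellProj 0 + ((1 - lam : ℝ):ℂ) • e01)
      = (lam:ℂ) • T (bellProj 0) + ((1 - lam : ℝ):ℂ) • T e01 := by
    rw [hform, hform, hform]; exact kraus_lin K _ _ _ _
  have key : (lam:ℂ) • T (bellProj 0) + ((1-lam:ℝ):ℂ) • T e01
      = (lam:ℂ) • bellProj 0 + ((1-lam:ℝ):ℂ) • bellProj 1 := by rw [← hlin, hmap]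
  have hσpsd : (T (bellProj 0)).PosSemidef := by
    rw [hform]; exact kraus_psd K _ (ketBra_posSemidef _)
  have hσtr : (T (bellProj 0)).trace = 1 := by
    rw [hform, kraus_trace K hsum, trace_bellProj0]
  obtain ⟨α1, hα1n, hα1⟩ := nonneg_exists (show (0:ℂ) ≤ (bellProj 0 * T (bellProj 0)).trace by
    rw [bellProj, trace_ketBra_mul]; exact hσpsd.dotProduct_mulVec_nonneg _)
  obtain ⟨α2, hα2n, hα2⟩ := nonneg_exists (show (0:ℂ) ≤ (bellProj 1 * T (bellProj 0)).trace by
    rw [bellProj, trace_ketBra_mul]; exact hσpsd.dotProduct_mulVec_nonneg _)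
  obtain ⟨β1, hβ1eq, hβ1le⟩ := sep_bound0 _ (hNE e01 e01_sep)
  obtain ⟨β2, hβ2eq, hβ2le⟩ := sep_bound1 _ (hNE e01 e01_sep)
  have e0 := congrArg (fun M => (bellProj 0 * M).trace) key
  simp only [Matrix.mul_add, Matrix.mul_smul, Matrix.trace_add, Matrix.trace_smul,
    smul_eq_mul] at e0
  rw [hα1, hβ1eq, trace_phi00, trace_phi01, mul_one, mul_zero, add_zero] at e0
  have E1 : lam * α1 + (1-lam) * β1 = lam := by exact_mod_cast e0
  have e1 := congrArg (fun M => (bellProj 1 * M).trace) key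
  simp only [Matrix.mul_add, Matrix.mul_smul, Matrix.trace_add, Matrix.trace_smul,
    smul_eq_mul] at e1
  rw [hα2, hβ2eq, trace_phi10, trace_phi11, mul_one, mul_zero, zero_add] at e1
  have E2 : lam * α2 + (1-lam) * β2 = 1 - lam := by exact_mod_cast e1
  have hsum2 := sum_two_traces (T (bellProj 0))
  rw [hα1, hα2] at hsum2
  obtain ⟨r00, hr00n, hr00⟩ := nonneg_exists (diag_nonneg hσpsd ((0:Fin 2),(0:Fin 2)))
  obtain ⟨r01, hr01n, hr01⟩ := nonneg_exists (diag_nonneg hσpsd ((0:Fin 2),(1:Fin 2)))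
  obtain ⟨r10, hr10n, hr10⟩ := nonneg_exists (diag_nonneg hσpsd ((1:Fin 2),(0:Fin 2)))
  obtain ⟨r11, hr11n, hr11⟩ := nonneg_exists (diag_nonneg hσpsd ((1:Fin 2),(1:Fin 2)))
  have htr4 : T (bellProj 0) (0,0) (0,0) + T (bellProj 0) (0,1) (0,1)
      + T (bellProj 0) (1,0) (1,0) + T (bellProj 0) (1,1) (1,1) = 1 := by
    rw [← hσtr]
    simp [Matrix.trace, Matrix.diag, Fintype.sum_prod_type, Fin.sum_univ_two]
    ring
  rw [hr00, hr01, hr10, hr11] at htr4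
  have htr4' : r00 + r01 + r10 + r11 = 1 := by exact_mod_cast htr4
  rw [hr00, hr11] at hsum2
  have hαsum : α1 + α2 = r00 + r11 := by exact_mod_cast hsum2
  have hA : α1 + α2 ≤ 1 := by linarith
  have hlam0 : (0:ℝ) < lam := by linarith
  have hμ : (0:ℝ) < 1 - lam := by linarith
  have hSle : lam * α1 + lam * α2 ≤ lam := by nlinarith
  have h9 : (1-lam) * (β1 + β2) ≥ (1-lam) * 1 := by
    have hE12 : lam * α1 + lam * α2 + ((1-lam) * β1 + (1-lam) * β2) = 1 := by linarith
    nlinarith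
  have hbsum : 1 ≤ β1 + β2 := le_of_mul_le_mul_left (by linarith) hμ
  have hb1 : β1 = 1/2 := by linarith
  have hb2 : β2 = 1/2 := by linarith
  have ha1 : α1 = (3*lam-1)/(2*lam) := by
    field_simp
    nlinarith [E1]
  have ha2 : α2 = (1-lam)/(2*lam) := by
    field_simp
    nlinarith [E2]
  refine ⟨?_, ?_, ?_, ?_⟩
  · rw [hα1, ha1]
  · rw [hα2, ha2]
  · rw [hβ1eq, hb1]; norm_num
  · rw [hβ2eq, hb2]; norm_num
end
end

section
/- For every ε > 0, the 2-dimensional subspace V_ε = span{|00⟩ + |11⟩ + √2 ε|10⟩, |01⟩} of ℂ²⊗ℂ² ≅ ℂ⁴ contains exactly two one-dimensional subspaces spanned by product vectors, whereas the subspace V_0 = span{|00⟩ + |11⟩, |01⟩} contains exactly one one-dimensional subspace spanned by a product vector. -/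
noncomputable section

/-- Tensor product of two vectors in ℂ². -/
def tensorVec (u v : Fin 2 → ℂ) : Vec4 := fun p => u p.1 * v p.2

/-- ψ is a product vector if ψ = u ⊗ v. -/
def IsProductVec (ψ : Vec4) : Prop := ∃ u v : Fin 2 → ℂ, ψ = tensorVec u v


def va (c : ℂ) : Vec4 := ket 0 0 + ket 1 1 + c • ket 1 0
def vb : Vec4 := ket 0 1
def w (c : ℂ) : Vec4 := tensorVec ![1, c] ![c, 1]

lemma vb_prod : IsProductVec vb := by
  refine ⟨![1, 0], ![0, 1], ?_⟩
  funext p; obtain ⟨i, j⟩ := p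
  fin_cases i <;> fin_cases j <;> simp [vb, ket, tensorVec, Prod.ext_iff]

lemma vb_ne : vb ≠ 0 := by
  intro h
  have := congrFun h ((0 : Fin 2), (1 : Fin 2))
  simp [vb, ket] at this

lemma w_eq (c : ℂ) : w c = c • va c + vb := by
  funext p; obtain ⟨i, j⟩ := p
  fin_cases i <;> fin_cases j <;>
    simp [w, va, vb, ket, tensorVec, Prod.ext_iff]

lemma w_ne (c : ℂ) : w c ≠ 0 := by
  intro h
  have := congrFun h ((0 : Fin 2), (1 : Fin 2))
  simp [w, tensorVec] at this

lemma prod_cond {ψ : Vec4} (h : IsProductVec ψ) :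
    ψ (0, 0) * ψ (1, 1) = ψ (0, 1) * ψ (1, 0) := by
  obtain ⟨u, v, rfl⟩ := h
  simp [tensorVec]; ring

lemma comps (c α β : ℂ) :
    (α • va c + β • vb) (0, 0) = α ∧ (α • va c + β • vb) (0, 1) = β ∧
    (α • va c + β • vb) (1, 0) = α * c ∧ (α • va c + β • vb) (1, 1) = α := by
  refine ⟨?_, ?_, ?_, ?_⟩ <;> simp [va, vb, ket, Prod.ext_iff]

lemma key_set (c : ℂ) :
    {L : Submodule ℂ Vec4 |
        L ≤ Submodule.span ℂ {va c, vb} ∧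
        ∃ ψ : Vec4, ψ ≠ 0 ∧ IsProductVec ψ ∧ L = Submodule.span ℂ {ψ}}
    = if c = 0 then {Submodule.span ℂ {vb}}
      else {Submodule.span ℂ {vb}, Submodule.span ℂ {w c}} := by
  ext L
  simp only [Set.mem_setOf_eq]
  constructor
  · rintro ⟨hle, ψ, hψ0, hprod, rfl⟩
    have hmem : ψ ∈ Submodule.span ℂ {va c, vb} :=
      hle (Submodule.mem_span_singleton_self ψ)
    obtain ⟨α, β, hαβ⟩ := Submodule.mem_span_pair.mp hmem
    obtain ⟨h00, h01, h10, h11⟩ := comps c α β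
    rw [hαβ] at h00 h01 h10 h11
    have hcond := prod_cond hprod
    rw [h00, h01, h10, h11] at hcond
    by_cases hα : α = 0
    · have hψ : ψ = β • vb := by rw [← hαβ, hα]; simp
      have hβ : β ≠ 0 := by rintro rfl; exact hψ0 (by simp [hψ])
      have : Submodule.span ℂ {ψ} = Submodule.span ℂ {vb} := by
        rw [hψ]; exact Submodule.span_singleton_smul_eq (IsUnit.mk0 β hβ) _
      split <;> simp [this]
    · have hαβc : α = β * c := by
        have h' : α * α = α * (β * c) := by linear_combination hcond
        exact mul_left_cancel₀ hα h'
      have hc : c ≠ 0 := by rintro rfl; rw [mul_zero] at hαβc; exact hα hαβc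
      have hβ : β ≠ 0 := by rintro rfl; rw [zero_mul] at hαβc; exact hα hαβc
      have hψ : ψ = β • w c := by
        rw [← hαβ, w_eq, hαβc, smul_add, smul_smul]
      have : Submodule.span ℂ {ψ} = Submodule.span ℂ {w c} := by
        rw [hψ]; exact Submodule.span_singleton_smul_eq (IsUnit.mk0 β hβ) _
      simp [hc, this]
  · intro hL
    have hbmem : vb ∈ Submodule.span ℂ {va c, vb} :=
      Submodule.subset_span (by simp)
    have hwmem : w c ∈ Submodule.span ℂ {va c, vb} := by
      rw [w_eq]
      exact Submodule.add_mem _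
        (Submodule.smul_mem _ _ (Submodule.subset_span (by simp))) hbmem
    split at hL
    · rw [Set.mem_singleton_iff] at hL
      subst hL
      exact ⟨Submodule.span_le.mpr (by simpa using hbmem), vb, vb_ne, vb_prod, rfl⟩
    · rcases hL with hL | hL <;> subst hL
      · exact ⟨Submodule.span_le.mpr (by simpa using hbmem), vb, vb_ne, vb_prod, rfl⟩
      · exact ⟨Submodule.span_le.mpr (by simpa using hwmem), w c, w_ne c,
          ⟨_, _, rfl⟩, rfl⟩

lemma spans_ne (c : ℂ) (hc : c ≠ 0) :
    Submodule.span ℂ {vb} ≠ Submodule.span ℂ {w c} := by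
  intro h
  have : w c ∈ Submodule.span ℂ ({vb} : Set Vec4) := by
    rw [h]; exact Submodule.mem_span_singleton_self _
  obtain ⟨t, ht⟩ := Submodule.mem_span_singleton.mp this
  have := congrFun ht ((0 : Fin 2), (0 : Fin 2))
  simp [w, vb, tensorVec, ket, Prod.ext_iff] at this
  exact hc this.symm

theorem product_lines_in_Veps :
    (∀ ε : ℝ, 0 < ε →
      {L : Submodule ℂ Vec4 |
          L ≤ Submodule.span ℂ
              {ket 0 0 + ket 1 1 + ((Real.sqrt 2 * ε : ℝ) : ℂ) • ket 1 0, ket 0 1} ∧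
          ∃ ψ : Vec4, ψ ≠ 0 ∧ IsProductVec ψ ∧ L = Submodule.span ℂ {ψ}}.ncard = 2) ∧
    {L : Submodule ℂ Vec4 |
        L ≤ Submodule.span ℂ {ket 0 0 + ket 1 1, ket 0 1} ∧
        ∃ ψ : Vec4, ψ ≠ 0 ∧ IsProductVec ψ ∧ L = Submodule.span ℂ {ψ}}.ncard = 1 := by
  constructor
  · intro ε hε
    set c : ℂ := ((Real.sqrt 2 * ε : ℝ) : ℂ) with hcdef
    have hc : c ≠ 0 := by
      rw [hcdef]
      simp only [ne_eq, Complex.ofReal_eq_zero]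
      exact ne_of_gt (mul_pos (Real.sqrt_pos.mpr (by norm_num)) hε)
    have hset : {L : Submodule ℂ Vec4 |
          L ≤ Submodule.span ℂ {ket 0 0 + ket 1 1 + c • ket 1 0, ket 0 1} ∧
          ∃ ψ : Vec4, ψ ≠ 0 ∧ IsProductVec ψ ∧ L = Submodule.span ℂ {ψ}}
        = {Submodule.span ℂ {vb}, Submodule.span ℂ {w c}} := by
      have := key_set c
      rw [if_neg hc] at this
      exact this
    rw [hset]
    exact Set.ncard_pair (spans_ne c hc)
  · have h0 : (ket 0 0 + ket 1 1 : Vec4) = va 0 := by simp [va]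
    rw [h0]
    have hset : {L : Submodule ℂ Vec4 |
          L ≤ Submodule.span ℂ {va 0, ket 0 1} ∧
          ∃ ψ : Vec4, ψ ≠ 0 ∧ IsProductVec ψ ∧ L = Submodule.span ℂ {ψ}}
        = {Submodule.span ℂ {vb}} := by
      have := key_set 0
      rw [if_pos rfl] at this
      exact this
    rw [hset]
    exact Set.ncard_singleton _
end
end
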